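/- arXiv:1704.08927 — 3 statements merged into one kernel-verified Lean document; each statement's English description precedes it below -/
import Mathlib

section
/- Let H be a nontrivial complex Hilbert space, Q : H → H the orthogonal projection onto a closed subspace, Q^⊥ = Id − Q, and let T : H → H be a bounded self-adjoint linear operator with ‖T‖ ≤ 1. Suppose u ∈ H satisfies ‖u‖ = 1 and T u = λ u for some λ ∈ ℝ. If ‖Q^⊥ u‖ < ε for some ε with 0 < ε < 1, then the operator T_Q := Q T Q has a spectral value λ_Q ∈ spectrum(T_Q) that is real and satisfies |λ − λ_Q| < ε / √(1 − ε²). -/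
/-!
Write `P` for the orthogonal projection `Q`. The vector `P u` is an approximate eigenvector of
`P T P`: its residual is `‖P T P (P u) - λ P u‖ = ‖P T (u - P u)‖ < ε`, while `‖P u‖ > √(1 - ε²)`
by Pythagoras. For a normal operator `S` the continuous functional calculus bounds
`‖(S - μ)⁻¹‖` by the inverse distance from `μ` to the spectrum, so `‖S x - μ x‖ < δ ‖x‖` forces a
spectral value within `δ` of `μ`; for self-adjoint `S` that value is real.
-/

namespace ContinuousLinearMap

variable {H : Type*} [NormedAddCommGroup H] [InnerProductSpace ℂ H] [CompleteSpace H]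

theorem mul_norm_le_norm_apply_sub_smul {S : H →L[ℂ] H} [IsStarNormal S] {μ : ℂ} {δ : ℝ}
    (hδ : 0 < δ) (hS : ∀ z ∈ spectrum ℂ S, δ ≤ ‖z - μ‖) (x : H) :
    δ * ‖x‖ ≤ ‖S x - μ • x‖ := by
  have hne : ∀ z ∈ spectrum ℂ S, z - μ ≠ 0 := fun z hz => norm_pos_iff.1 (hδ.trans_le (hS z hz))
  let R : (H →L[ℂ] H)ˣ := cfcUnits (fun z => z - μ) S hne
  have hR : (R : H →L[ℂ] H) x = S x - μ • x := by
    simp [R, cfc_sub (fun z : ℂ => z) (fun _ => μ) S, cfc_id' ℂ S, cfc_const μ S,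
      Algebra.algebraMap_eq_smul_one]
  have hRinv : ‖(↑R⁻¹ : H →L[ℂ] H)‖ ≤ δ⁻¹ :=
    norm_cfc_le (inv_nonneg.2 hδ.le) fun z hz => by
      rw [norm_inv]
      exact inv_anti₀ hδ (hS z hz)
  have hx : ‖x‖ ≤ δ⁻¹ * ‖S x - μ • x‖ := calc
    ‖x‖ = ‖(↑R⁻¹ : H →L[ℂ] H) ((R : H →L[ℂ] H) x)‖ := by
      rw [← mul_apply_eq_comp, R.inv_mul, one_apply_eq_self]
    _ ≤ δ⁻¹ * ‖S x - μ • x‖ := by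
      rw [hR]
      exact (le_opNorm _ _).trans (by gcongr)
  exact (le_inv_mul_iff₀ hδ).1 hx

theorem exists_mem_spectrum_norm_sub_lt {S : H →L[ℂ] H} [IsStarNormal S] {μ : ℂ} {δ : ℝ}
    {x : H} (hx : ‖S x - μ • x‖ < δ * ‖x‖) : ∃ z ∈ spectrum ℂ S, ‖z - μ‖ < δ := by
  have hδ : 0 < δ := pos_of_mul_pos_left ((norm_nonneg _).trans_lt hx) (norm_nonneg x)
  by_contra! h
  exact (mul_norm_le_norm_apply_sub_smul hδ h x).not_gt hx

end ContinuousLinearMap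

theorem IsSelfAdjoint.exists_real_mem_spectrum_abs_sub_lt {H : Type*} [NormedAddCommGroup H]
    [InnerProductSpace ℂ H] [CompleteSpace H] {S : H →L[ℂ] H} (hS : IsSelfAdjoint S)
    {lam δ : ℝ} {x : H} (hx : ‖S x - (lam : ℂ) • x‖ < δ * ‖x‖) :
    ∃ r : ℝ, (r : ℂ) ∈ spectrum ℂ S ∧ |lam - r| < δ := by
  have := hS.isStarNormal
  obtain ⟨z, hz, hzlam⟩ := ContinuousLinearMap.exists_mem_spectrum_norm_sub_lt hx
  refine ⟨z.re, hS.mem_spectrum_eq_re hz ▸ hz, ?_⟩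
  rw [hS.mem_spectrum_eq_re hz] at hzlam
  rwa [← Complex.ofReal_sub, Complex.norm_real, Real.norm_eq_abs, abs_sub_comm] at hzlam

theorem Submodule.norm_compression_apply_starProjection_sub_smul_le {𝕜 E : Type*} [RCLike 𝕜]
    [NormedAddCommGroup E] [InnerProductSpace 𝕜 E] (K : Submodule 𝕜 E)
    [K.HasOrthogonalProjection] {T : E →L[𝕜] E} {u : E} {μ : 𝕜} (hTu : T u = μ • u) :
    ‖(K.starProjection ∘L T ∘L K.starProjection) (K.starProjection u) - μ • K.starProjection u‖
      ≤ ‖T‖ * ‖u - K.starProjection u‖ := by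
  have hres : (K.starProjection ∘L T ∘L K.starProjection) (K.starProjection u)
      - μ • K.starProjection u = -K.starProjection (T (u - K.starProjection u)) := by
    simp [map_sub, hTu, K.starProjection_eq_self_iff.2 (K.starProjection_apply_mem u)]
  calc _ = ‖K.starProjection (T (u - K.starProjection u))‖ := by rw [hres, norm_neg]
    _ ≤ ‖T (u - K.starProjection u)‖ := K.norm_starProjection_apply_le _
    _ ≤ ‖T‖ * ‖u - K.starProjection u‖ := T.le_opNorm _

theorem eigenvalue_perturbation_of_projection_general
    {H : Type*} [NormedAddCommGroup H] [InnerProductSpace ℂ H] [CompleteSpace H]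
    (Q : H →L[ℂ] H) (hQidem : Q ∘L Q = Q) (hQsa : IsSelfAdjoint Q)
    (T : H →L[ℂ] H) (hTsa : IsSelfAdjoint T) (hTnorm : ‖T‖ ≤ 1)
    (u : H) (hu : ‖u‖ = 1) (lam : ℝ) (hTu : T u = (lam : ℂ) • u)
    (ε : ℝ) (hε0 : 0 < ε) (hε1 : ε < 1) (hQu : ‖u - Q u‖ < ε) :
    ∃ lamQ : ℝ, (lamQ : ℂ) ∈ spectrum ℂ (Q ∘L T ∘L Q) ∧
      |lam - lamQ| < ε / Real.sqrt (1 - ε ^ 2) := by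
  obtain ⟨K, _, rfl⟩ := isStarProjection_iff_eq_starProjection.mp ⟨hQidem, hQsa⟩
  have hPu : √(1 - ε ^ 2) < ‖K.starProjection u‖ := by
    have hpyth := K.norm_sq_eq_add_norm_sq_starProjection u
    rw [K.starProjection_orthogonal_val, hu] at hpyth
    rw [← Real.sqrt_sq (norm_nonneg (K.starProjection u))]
    exact Real.sqrt_lt_sqrt (by nlinarith) (by nlinarith [norm_nonneg (u - K.starProjection u)])
  have hsqrt : 0 < √(1 - ε ^ 2) := Real.sqrt_pos.2 (by nlinarith)
  refine (hTsa.conjugate_self hQsa).exists_real_mem_spectrum_abs_sub_lt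
    (x := K.starProjection u) ?_
  calc _ ≤ ‖T‖ * ‖u - K.starProjection u‖ :=
        K.norm_compression_apply_starProjection_sub_smul_le hTu
    _ ≤ ‖u - K.starProjection u‖ := mul_le_of_le_one_left (norm_nonneg _) hTnorm
    _ < ε := hQu
    _ = ε / √(1 - ε ^ 2) * √(1 - ε ^ 2) := by field_simp
    _ < ε / √(1 - ε ^ 2) * ‖K.starProjection u‖ := by gcongr

/-- Eigenvalue perturbation lemma: if `Q` is an orthogonal projection (a self-adjoint
idempotent bounded operator) on a nontrivial complex Hilbert space, `T` is a self-adjoint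
non-expansive bounded operator, and `u` is a unit eigenvector of `T` with real eigenvalue `λ`
such that `‖Q^⊥ u‖ < ε` for some `0 < ε < 1`, then `T_Q = Q T Q` has a real spectral value
`λ_Q` with `|λ - λ_Q| < ε / √(1 - ε²)`. -/
theorem eigenvalue_perturbation_of_projection
    {H : Type*} [NormedAddCommGroup H] [InnerProductSpace ℂ H] [CompleteSpace H] [Nontrivial H]
    (Q : H →L[ℂ] H) (hQidem : Q ∘L Q = Q) (hQsa : IsSelfAdjoint Q)
    (T : H →L[ℂ] H) (hTsa : IsSelfAdjoint T) (hTnorm : ‖T‖ ≤ 1)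
    (u : H) (hu : ‖u‖ = 1) (lam : ℝ) (hTu : T u = (lam : ℂ) • u)
    (ε : ℝ) (hε0 : 0 < ε) (hε1 : ε < 1) (hQu : ‖u - Q u‖ < ε) :
    ∃ lamQ : ℝ, (lamQ : ℂ) ∈ spectrum ℂ (Q ∘L T ∘L Q) ∧
      |lam - lamQ| < ε / Real.sqrt (1 - ε ^ 2) :=
  eigenvalue_perturbation_of_projection_general Q hQidem hQsa T hTsa hTnorm u hu lam hTu ε hε0 hε1
    hQu
end

section
/- Let H be a Hilbert space, Q : H → H the orthogonal projection onto a closed subspace, and T : H → H a bounded linear operator with ‖T‖ ≤ 1. Suppose u ∈ H satisfies ‖u‖ = 1 and T u = λ u for a scalar λ, and suppose ‖u − Q u‖ < ε for some ε with 0 < ε < 1. Then Q u ≠ 0, and the normalized vector u' := Q u / ‖Q u‖ satisfies ‖(Q T Q) u' − λ u'‖ < ε / √(1 − ε²). -/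
/-!
Write `u = Qu + (u - Qu)` with orthogonal summands. Since `Q` fixes `Qu`, the compressed defect is
`(QTQ)(Qu) - λ Qu = QT(Qu - u)`, whose norm is at most `‖u - Qu‖ < ε` because `Q` and `T` are
contractions. Pythagoras gives `‖Qu‖² = 1 - ‖u - Qu‖² > 1 - ε²`, and normalizing divides the
defect by `‖Qu‖ > √(1 - ε²)`.
-/

theorem ContinuousLinearMap.norm_comp_comp_apply_sub_smul_le
    {𝕜 E : Type*} [NontriviallyNormedField 𝕜] [NormedAddCommGroup E] [NormedSpace 𝕜 E]
    {P T : E →L[𝕜] E} (hP : IsIdempotentElem P) (hPnorm : ‖P‖ ≤ 1) (hTnorm : ‖T‖ ≤ 1)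
    {u : E} {lam : 𝕜} (hTu : T u = lam • u) :
    ‖(P ∘L T ∘L P) (P u) - lam • P u‖ ≤ ‖u - P u‖ := by
  have hPP (x : E) : P (P x) = P x := congr($hP x)
  have hdefect : (P ∘L T ∘L P) (P u) - lam • P u = P (T (P u - u)) := by
    simp only [comp_apply, hPP, map_sub, hTu, map_smul]
  calc ‖(P ∘L T ∘L P) (P u) - lam • P u‖ = ‖P (T (P u - u))‖ := by rw [hdefect]
    _ ≤ ‖T (P u - u)‖ := (P.le_opNorm _).trans (mul_le_of_le_one_left (norm_nonneg _) hPnorm)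
    _ ≤ ‖P u - u‖ := (T.le_opNorm _).trans (mul_le_of_le_one_left (norm_nonneg _) hTnorm)
    _ = ‖u - P u‖ := norm_sub_rev _ _

theorem IsStarProjection.norm_sq_add_norm_sub_sq
    {𝕜 H : Type*} [RCLike 𝕜] [NormedAddCommGroup H] [InnerProductSpace 𝕜 H] [CompleteSpace H]
    {Q : H →L[𝕜] H} (hQ : IsStarProjection Q) (x : H) :
    ‖Q x‖ ^ 2 + ‖x - Q x‖ ^ 2 = ‖x‖ ^ 2 := by
  obtain ⟨_, hQK⟩ := isStarProjection_iff_eq_starProjection_range.mp hQ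
  rw [Submodule.norm_sq_eq_add_norm_sq_starProjection x (LinearMap.range (Q : H →ₗ[𝕜] H)),
    Submodule.starProjection_orthogonal_val, ← hQK]

theorem Real.sqrt_one_sub_sq_lt_of_sq_add_sq_eq_one {a b ε : ℝ} (ha : 0 ≤ a)
    (hab : a ^ 2 + b ^ 2 = 1) (hb : |b| < ε) (hε : ε ≤ 1) : √(1 - ε ^ 2) < a := by
  have hsq : b ^ 2 < ε ^ 2 := sq_lt_sq' (abs_lt.mp hb).1 (abs_lt.mp hb).2
  have hε0 : 0 ≤ ε := (abs_nonneg b).trans hb.le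
  calc √(1 - ε ^ 2) < √(a ^ 2) := Real.sqrt_lt_sqrt (by nlinarith) (by linarith)
    _ = a := Real.sqrt_sq ha

theorem compressed_operator_normalized_defect_general
    {𝕜 H : Type*} [RCLike 𝕜] [NormedAddCommGroup H] [InnerProductSpace 𝕜 H] [CompleteSpace H]
    (Q : H →L[𝕜] H) (hQidem : Q ∘L Q = Q) (hQsa : IsSelfAdjoint Q)
    (T : H →L[𝕜] H) (hTnorm : ‖T‖ ≤ 1)
    (u : H) (hu : ‖u‖ = 1) (lam : 𝕜) (hTu : T u = lam • u)
    (ε : ℝ) (hε1 : ε < 1) (hQu : ‖u - Q u‖ < ε) :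
    Q u ≠ 0 ∧
      ‖(Q ∘L T ∘L Q) ((‖Q u‖ : 𝕜)⁻¹ • Q u) - lam • ((‖Q u‖ : 𝕜)⁻¹ • Q u)‖
        < ε / Real.sqrt (1 - ε ^ 2) := by
  have hQ : IsStarProjection Q := ⟨hQidem, hQsa⟩
  have hpyth : ‖Q u‖ ^ 2 + ‖u - Q u‖ ^ 2 = 1 := by rw [hQ.norm_sq_add_norm_sub_sq, hu, one_pow]
  have hlow : √(1 - ε ^ 2) < ‖Q u‖ := Real.sqrt_one_sub_sq_lt_of_sq_add_sq_eq_one (norm_nonneg _)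
    hpyth (by rwa [abs_norm]) hε1.le
  have hsqrt_pos : 0 < √(1 - ε ^ 2) := Real.sqrt_pos.mpr (by nlinarith [norm_nonneg (u - Q u)])
  have hQu_pos : 0 < ‖Q u‖ := hsqrt_pos.trans hlow
  refine ⟨norm_pos_iff.mp hQu_pos, ?_⟩
  rw [map_smul, smul_comm lam, ← smul_sub, norm_smul, norm_inv, RCLike.norm_ofReal,
    abs_of_pos hQu_pos, inv_mul_eq_div]
  calc ‖(Q ∘L T ∘L Q) (Q u) - lam • Q u‖ / ‖Q u‖ ≤ ‖u - Q u‖ / ‖Q u‖ := by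
        gcongr
        exact ContinuousLinearMap.norm_comp_comp_apply_sub_smul_le hQ.isIdempotentElem
          (hQ.norm_le Q) hTnorm hTu
    _ < ε / √(1 - ε ^ 2) := div_lt_div₀ hQu hlow.le ((norm_nonneg _).trans hQu.le) hsqrt_pos

/-- Second estimate in the eigenvalue-perturbation lemma: if `Q` is an orthogonal projection
(self-adjoint idempotent bounded operator) on a Hilbert space, `T` is a bounded operator with
`‖T‖ ≤ 1`, `u` is a unit eigenvector of `T` with eigenvalue `λ`, and `‖u - Qu‖ < ε` with
`0 < ε < 1`, then `Qu ≠ 0` and the normalized vector `u' = Qu / ‖Qu‖` satisfies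
`‖(QTQ) u' - λ u'‖ < ε / √(1 - ε²)`. -/
theorem compressed_operator_normalized_defect
    {𝕜 H : Type*} [RCLike 𝕜] [NormedAddCommGroup H] [InnerProductSpace 𝕜 H] [CompleteSpace H]
    (Q : H →L[𝕜] H) (hQidem : Q ∘L Q = Q) (hQsa : IsSelfAdjoint Q)
    (T : H →L[𝕜] H) (hTnorm : ‖T‖ ≤ 1)
    (u : H) (hu : ‖u‖ = 1) (lam : 𝕜) (hTu : T u = lam • u)
    (ε : ℝ) (hε0 : 0 < ε) (hε1 : ε < 1) (hQu : ‖u - Q u‖ < ε) :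
    Q u ≠ 0 ∧
      ‖(Q ∘L T ∘L Q) ((‖Q u‖ : 𝕜)⁻¹ • Q u) - lam • ((‖Q u‖ : 𝕜)⁻¹ • Q u)‖
        < ε / Real.sqrt (1 - ε ^ 2) :=
  compressed_operator_normalized_defect_general Q hQidem hQsa T hTnorm u hu lam hTu ε hε1 hQu
end

section
/- Let ρ : ℝⁿ → ℝ be measurable with ρ(x) > 0 for Lebesgue-almost every x and ∫ ρ dx = 1, and let μ be the measure with density ρ with respect to Lebesgue measure. Let p : ℝⁿ × ℝⁿ → ℝ be measurable and nonnegative, let φ : ℝⁿ → ℝ be measurable with ∫ φ² dμ = 1, and let λ ∈ ℝ with λ ≠ 0. Fix ε ≥ 0 and two points x, y ∈ ℝⁿ, and assume: (i) z ↦ φ(z)·p(x,z) and z ↦ φ(z)·p(y,z) are Lebesgue-integrable with λ φ(x) = ∫ φ(z) p(x,z) dz and λ φ(y) = ∫ φ(z) p(y,z) dz; (ii) there exists a measurable g : ℝⁿ → ℝ with ∫ (p(x,z) − g(z))² / ρ(z) dz ≤ ε² and ∫ (p(y,z) − g(z))² / ρ(z) dz ≤ ε². Then |φ(x) − φ(y)|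 ≤ 2ε / |λ|. -/
/-!
Subtracting the two eigenvalue equations gives `λ (φ x - φ y) = ∫ φ (p(x,·) - p(y,·))`.
Passing through the common density `g`, each of `∫ |φ| |p(x,·) - g|` and `∫ |φ| |p(y,·) - g|`
is at most `‖φ‖_{L²(μ)} ‖p(·,·) - g‖_{L²_{1/μ}} ≤ ε` by the Cauchy–Schwarz inequality applied to
`φ √ρ` and `(p - g) / √ρ`.
-/

open MeasureTheory

theorem ENNReal.ofReal_sq_rpow_one_half {c : ℝ} (hc : 0 ≤ c) :
    ENNReal.ofReal (c ^ 2) ^ (1 / 2 : ℝ) = ENNReal.ofReal c := by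
  rw [ENNReal.ofReal_pow hc, ← ENNReal.rpow_natCast, ← ENNReal.rpow_mul]
  norm_num

section WeightedCauchySchwarz

variable {α : Type*} [MeasurableSpace α] {ν : Measure α} {ρ f q : α → ℝ}

theorem lintegral_enorm_mul_le_weighted_L2_mul_L2 (hρ : ∀ᵐ z ∂ν, 0 < ρ z)
    (hρm : AEMeasurable ρ ν) (hf : AEMeasurable f ν) (hq : AEMeasurable q ν) :
    ∫⁻ z, ‖f z * q z‖ₑ ∂ν ≤
      (∫⁻ z, ENNReal.ofReal (f z ^ 2 * ρ z) ∂ν) ^ (1 / 2 : ℝ) *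
        (∫⁻ z, ENNReal.ofReal (q z ^ 2 / ρ z) ∂ν) ^ (1 / 2 : ℝ) := by
  have hsplit : ∀ᵐ z ∂ν, ‖f z * q z‖ₑ =
      ENNReal.ofReal (f z ^ 2 * ρ z) ^ (1 / 2 : ℝ) *
        ENNReal.ofReal (q z ^ 2 / ρ z) ^ (1 / 2 : ℝ) := by
    filter_upwards [hρ] with z hz
    have hprod : f z ^ 2 * ρ z * (q z ^ 2 / ρ z) = |f z * q z| ^ 2 := by
      rw [sq_abs]; field_simp
    rw [← ENNReal.mul_rpow_of_nonneg _ _ (by norm_num), ← ENNReal.ofReal_mul (by positivity),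
      hprod, ENNReal.ofReal_sq_rpow_one_half (abs_nonneg _), Real.enorm_eq_ofReal_abs]
  rw [lintegral_congr_ae hsplit]
  exact ENNReal.lintegral_mul_norm_pow_le ((hf.pow_const 2).mul hρm).ennreal_ofReal
    ((hq.pow_const 2).div hρm).ennreal_ofReal (by norm_num) (by norm_num) (by norm_num)

theorem lintegral_enorm_mul_le_of_weighted_sq_le (hρ : ∀ᵐ z ∂ν, 0 < ρ z)
    (hρm : AEMeasurable ρ ν) (hf : AEMeasurable f ν) (hq : AEMeasurable q ν) {a b : ℝ}
    (ha : 0 ≤ a) (hb : 0 ≤ b)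
    (hfa : ∫⁻ z, ENNReal.ofReal (f z ^ 2 * ρ z) ∂ν ≤ ENNReal.ofReal (a ^ 2))
    (hqb : ∫⁻ z, ENNReal.ofReal (q z ^ 2 / ρ z) ∂ν ≤ ENNReal.ofReal (b ^ 2)) :
    ∫⁻ z, ‖f z * q z‖ₑ ∂ν ≤ ENNReal.ofReal (a * b) := by
  calc ∫⁻ z, ‖f z * q z‖ₑ ∂ν
      ≤ ENNReal.ofReal (a ^ 2) ^ (1 / 2 : ℝ) * ENNReal.ofReal (b ^ 2) ^ (1 / 2 : ℝ) :=
        (lintegral_enorm_mul_le_weighted_L2_mul_L2 hρ hρm hf hq).trans <| by gcongr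
    _ = ENNReal.ofReal (a * b) := by rw [ENNReal.ofReal_sq_rpow_one_half ha, ENNReal.ofReal_sq_rpow_one_half hb, ENNReal.ofReal_mul ha]

theorem abs_integral_mul_sub_le_add {p₁ p₂ g : α → ℝ} (hf : AEMeasurable f ν)
    (hp₁g : AEMeasurable (p₁ - g) ν) {a b : ℝ} (ha : 0 ≤ a) (hb : 0 ≤ b)
    (h₁ : ∫⁻ z, ‖f z * (p₁ z - g z)‖ₑ ∂ν ≤ ENNReal.ofReal a)
    (h₂ : ∫⁻ z, ‖f z * (p₂ z - g z)‖ₑ ∂ν ≤ ENNReal.ofReal b) :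
    |∫ z, f z * (p₁ z - p₂ z) ∂ν| ≤ a + b := by
  have hsplit : ∀ z, ‖f z * (p₁ z - p₂ z)‖ₑ ≤ ‖f z * (p₁ z - g z)‖ₑ + ‖f z * (p₂ z - g z)‖ₑ :=
    fun z => by
      rw [show f z * (p₁ z - p₂ z) = f z * (p₁ z - g z) - f z * (p₂ z - g z) by ring]
      exact enorm_sub_le
  rw [← ENNReal.ofReal_le_ofReal_iff (by positivity), ← Real.enorm_eq_ofReal_abs,
    ENNReal.ofReal_add ha hb]
  calc ‖∫ z, f z * (p₁ z - p₂ z) ∂ν‖ₑ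
      ≤ ∫⁻ z, ‖f z * (p₁ z - p₂ z)‖ₑ ∂ν := enorm_integral_le_lintegral_enorm _
    _ ≤ ∫⁻ z, (‖f z * (p₁ z - g z)‖ₑ + ‖f z * (p₂ z - g z)‖ₑ) ∂ν := lintegral_mono hsplit
    _ = (∫⁻ z, ‖f z * (p₁ z - g z)‖ₑ ∂ν) + ∫⁻ z, ‖f z * (p₂ z - g z)‖ₑ ∂ν :=
        lintegral_add_left' (hf.mul hp₁g).enorm _
    _ ≤ ENNReal.ofReal a + ENNReal.ofReal b := add_le_add h₁ h₂

end WeightedCauchySchwarz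

theorem eigenfunction_almost_constant_on_fibers_general
    {n : ℕ} (ρ : (Fin n → ℝ) → ℝ) (hρm : Measurable ρ)
    (hρpos : ∀ᵐ x, 0 < ρ x)
    (p : (Fin n → ℝ) → (Fin n → ℝ) → ℝ)
    (hpm : Measurable (Function.uncurry p))
    (φ : (Fin n → ℝ) → ℝ) (hφm : Measurable φ)
    (hφnorm : ∫⁻ z, ENNReal.ofReal ((φ z) ^ 2)
        ∂(MeasureTheory.volume.withDensity fun z => ENNReal.ofReal (ρ z)) = 1)
    (lam : ℝ) (hlam : lam ≠ 0) (ε : ℝ) (hε : 0 ≤ ε)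
    (x y : Fin n → ℝ)
    (hix : Integrable (fun z => φ z * p x z)) (hiy : Integrable (fun z => φ z * p y z))
    (heigx : lam * φ x = ∫ z, φ z * p x z)
    (heigy : lam * φ y = ∫ z, φ z * p y z)
    (hg : ∃ g : (Fin n → ℝ) → ℝ, Measurable g ∧
      (∫⁻ z, ENNReal.ofReal ((p x z - g z) ^ 2 / ρ z)) ≤ ENNReal.ofReal (ε ^ 2) ∧
      (∫⁻ z, ENNReal.ofReal ((p y z - g z) ^ 2 / ρ z)) ≤ ENNReal.ofReal (ε ^ 2)) :
    |φ x - φ y| ≤ 2 * ε / |lam| := by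
  obtain ⟨g, hgm, hgx, hgy⟩ := hg
  have hpx : Measurable (p x - g) := (hpm.comp measurable_prodMk_left).sub hgm
  have hpy : Measurable (p y - g) := (hpm.comp measurable_prodMk_left).sub hgm
  have hφρ : ∫⁻ z, ENNReal.ofReal (φ z ^ 2 * ρ z) ≤ ENNReal.ofReal (1 ^ 2) := by
    rw [lintegral_withDensity_eq_lintegral_mul _ hρm.ennreal_ofReal
      (hφm.pow_const 2).ennreal_ofReal] at hφnorm
    simp_rw [ENNReal.ofReal_mul (sq_nonneg _), mul_comm (ENNReal.ofReal (φ _ ^ 2))]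
    simpa using hφnorm.le
  have hdiff : lam * (φ x - φ y) = ∫ z, φ z * (p x z - p y z) := by
    rw [mul_sub, heigx, heigy, ← integral_sub hix hiy]
    simp only [mul_sub]
  have hbound : |lam| * |φ x - φ y| ≤ 1 * ε + 1 * ε := by
    rw [← abs_mul, hdiff]
    exact abs_integral_mul_sub_le_add hφm.aemeasurable hpx.aemeasurable (by positivity)
      (by positivity)
      (lintegral_enorm_mul_le_of_weighted_sq_le hρpos hρm.aemeasurable hφm.aemeasurable
        hpx.aemeasurable zero_le_one hε hφρ hgx)
      (lintegral_enorm_mul_le_of_weighted_sq_le hρpos hρm.aemeasurable hφm.aemeasurable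
        hpy.aemeasurable zero_le_one hε hφρ hgy)
  rw [le_div_iff₀ (abs_pos.2 hlam)]
  linarith

/-- If `φ` is a normalized pointwise eigenfunction (with eigenvalue `λ ≠ 0`) of the Koopman
operator with transition density `p`, and the transition densities `p(x,·)` and `p(y,·)` are
both `ε`-close in the `L²_{1/μ}` norm to a common function `g`, then
`|φ(x) - φ(y)| ≤ 2ε / |λ|`. -/
theorem eigenfunction_almost_constant_on_fibers
    {n : ℕ} (ρ : (Fin n → ℝ) → ℝ) (hρm : Measurable ρ)
    (hρpos : ∀ᵐ x, 0 < ρ x) (hρ1 : ∫ x, ρ x = 1)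
    (p : (Fin n → ℝ) → (Fin n → ℝ) → ℝ)
    (hpm : Measurable (Function.uncurry p)) (hpnn : ∀ x y, 0 ≤ p x y)
    (φ : (Fin n → ℝ) → ℝ) (hφm : Measurable φ)
    (hφnorm : ∫⁻ z, ENNReal.ofReal ((φ z) ^ 2)
        ∂(MeasureTheory.volume.withDensity fun z => ENNReal.ofReal (ρ z)) = 1)
    (lam : ℝ) (hlam : lam ≠ 0) (ε : ℝ) (hε : 0 ≤ ε)
    (x y : Fin n → ℝ)
    (hix : Integrable (fun z => φ z * p x z)) (hiy : Integrable (fun z => φ z * p y z))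
    (heigx : lam * φ x = ∫ z, φ z * p x z)
    (heigy : lam * φ y = ∫ z, φ z * p y z)
    (hg : ∃ g : (Fin n → ℝ) → ℝ, Measurable g ∧
      (∫⁻ z, ENNReal.ofReal ((p x z - g z) ^ 2 / ρ z)) ≤ ENNReal.ofReal (ε ^ 2) ∧
      (∫⁻ z, ENNReal.ofReal ((p y z - g z) ^ 2 / ρ z)) ≤ ENNReal.ofReal (ε ^ 2)) :
    |φ x - φ y| ≤ 2 * ε / |lam| :=
  eigenfunction_almost_constant_on_fibers_general ρ hρm hρpos p hpm φ hφm hφnorm lam hlam ε hε x y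
    hix hiy heigx heigy hg
end
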